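/- Let (Ω, μ) be a finite measure space with μ(Ω) > 0 and f : Ω → (0,∞) bounded measurable and bounded away from 0, with I := ∫ f dμ. Then exp( -(n/I) ∫ f ln f dμ ) = lim_{q→∞} ( (1/I) ∫ f^(q/(q+n)) dμ )^(q+n), where n ≥ 1 is a fixed natural number. -/

import Mathlib

/-!
With `G t = (1/I) ∫ f^(1-t) dμ` we have `G 0 = 1` and, differentiating under the integral sign,
`G'(0) = -(1/I) ∫ f ln f dμ`. Hence `ln G(t) / t → G'(0)` as `t → 0`, so `G(t)^(n/t) → exp (n G'(0))`;
the substitution `t = n/(q+n)` turns `G(t)^(n/t)` into `((1/I) ∫ f^(q/(q+n)) dμ)^(q+n)`.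
-/

open MeasureTheory Filter Topology Real

theorem tendsto_rpow_div_nhdsNE_zero_of_hasDerivAt {G : ℝ → ℝ} {c : ℝ} (k : ℝ) (hG0 : G 0 = 1)
    (hG : HasDerivAt G c 0) :
    Tendsto (fun t => G t ^ (k / t)) (𝓝[≠] 0) (𝓝 (exp (k * c))) := by
  have hlogG : HasDerivAt (fun t => log (G t)) c 0 := by
    simpa [hG0] using hG.log (by simp [hG0])
  have hslope : Tendsto (fun t => k * (log (G t) / t)) (𝓝[≠] 0) (𝓝 (k * c)) := by
    refine ((hasDerivAt_iff_tendsto_slope.1 hlogG).const_mul k).congr' ?_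
    filter_upwards with t
    simp [slope, hG0, div_eq_inv_mul]
  have hGpos : ∀ᶠ t in 𝓝[≠] (0 : ℝ), 0 < G t :=
    nhdsWithin_le_nhds (hG.continuousAt.eventually (lt_mem_nhds (by simp [hG0])))
  refine ((continuous_exp.tendsto _).comp hslope).congr' ?_
  filter_upwards [hGpos] with t ht
  rw [Function.comp_apply, rpow_def_of_pos ht]
  ring_nf

theorem rpow_le_exp_mul_of_abs_log_le {x M s r : ℝ} (hx : 0 < x) (hM : |log x| ≤ M)
    (hs : |s| ≤ r) : x ^ s ≤ exp (M * r) := by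
  rw [rpow_def_of_pos hx]
  refine exp_le_exp_of_le ((le_abs_self _).trans ?_)
  rw [abs_mul]
  exact mul_le_mul hM hs (abs_nonneg _) ((abs_nonneg _).trans hM)

section

variable {Ω : Type*} [MeasurableSpace Ω] {μ : Measure Ω} [IsFiniteMeasure μ] {f : Ω → ℝ} {M : ℝ}

theorem integrable_rpow_of_abs_log_le (hf : Measurable f) (hpos : ∀ x, 0 < f x)
    (hM : ∀ x, |log (f x)| ≤ M) (s : ℝ) : Integrable (fun x => f x ^ s) μ :=
  Integrable.of_bound (hf.pow_const s).aestronglyMeasurable (exp (M * |s|)) <|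
    ae_of_all _ fun x => by
      rw [norm_of_nonneg (rpow_nonneg (hpos x).le s)]
      exact rpow_le_exp_mul_of_abs_log_le (hpos x) (hM x) le_rfl

theorem hasDerivAt_integral_rpow (hf : Measurable f) (hpos : ∀ x, 0 < f x)
    (hM : ∀ x, |log (f x)| ≤ M) (s₀ : ℝ) :
    HasDerivAt (fun s => ∫ x, f x ^ s ∂μ) (∫ x, f x ^ s₀ * log (f x) ∂μ) s₀ := by
  have hbound : ∀ x, ∀ s ∈ Metric.ball s₀ 1,
      ‖f x ^ s * log (f x)‖ ≤ exp (M * (|s₀| + 1)) * M := by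
    intro x s hs
    have hs' : |s| ≤ |s₀| + 1 := by
      have := abs_sub_abs_le_abs_sub s s₀
      rw [Metric.mem_ball, Real.dist_eq] at hs
      linarith
    rw [norm_mul, norm_of_nonneg (rpow_nonneg (hpos x).le s), norm_eq_abs]
    exact mul_le_mul (rpow_le_exp_mul_of_abs_log_le (hpos x) (hM x) hs') (hM x)
      (abs_nonneg _) (exp_pos _).le
  exact (hasDerivAt_integral_of_dominated_loc_of_deriv_le (Metric.ball_mem_nhds s₀ one_pos)
    (Eventually.of_forall fun s => (hf.pow_const s).aestronglyMeasurable)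
    (integrable_rpow_of_abs_log_le hf hpos hM s₀)
    ((hf.pow_const s₀).mul (measurable_log.comp hf)).aestronglyMeasurable
    (ae_of_all _ hbound) (integrable_const _)
    (ae_of_all _ fun x s _ => (hasStrictDerivAt_const_rpow (hpos x) s).hasDerivAt)).2

end

theorem stmt_4 {Ω : Type*} [MeasurableSpace Ω] (μ : Measure Ω) [IsFiniteMeasure μ]
    (hμ : 0 < μ Set.univ) (f : Ω → ℝ) (hf : Measurable f)
    (a b : ℝ) (ha : 0 < a) (hbd : ∀ x, a ≤ f x ∧ f x ≤ b)
    (n : ℕ) (hn : 1 ≤ n) :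
    Tendsto
      (fun q : ℝ =>
        ((1 / ∫ x, f x ∂μ) * ∫ x, f x ^ (q / (q + n)) ∂μ) ^ (q + n))
      atTop
      (𝓝 (Real.exp
        (-((n : ℝ) / ∫ x, f x ∂μ) * ∫ x, f x * Real.log (f x) ∂μ))) := by
  have hpos : ∀ x, 0 < f x := fun x => ha.trans_le (hbd x).1
  have hlog : ∀ x, |log (f x)| ≤ max |log a| |log b| := fun x =>
    abs_le_max_abs_abs (log_le_log ha (hbd x).1) (log_le_log (hpos x) (hbd x).2)
  set I := ∫ x, f x ∂μ
  have hI : I ≠ 0 := by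
    have hfint := integrable_rpow_of_abs_log_le (μ := μ) hf hpos hlog 1
    simp only [rpow_one] at hfint
    refine ((integral_pos_iff_support_of_nonneg (fun x => (hpos x).le) hfint).2 ?_).ne'
    rwa [Function.support_eq_univ fun x => (hpos x).ne']
  set G : ℝ → ℝ := fun t => (1 / I) * ∫ x, f x ^ (1 - t) ∂μ
  have hG0 : G 0 = 1 := by
    simp only [G, sub_zero, rpow_one]
    exact one_div_mul_cancel hI
  have hG : HasDerivAt G ((1 / I) * -∫ x, f x ^ (1 - 0 : ℝ) * log (f x) ∂μ) 0 :=
    ((hasDerivAt_integral_rpow hf hpos hlog _).comp_const_sub 1 0).const_mul _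
  have hn0 : (0 : ℝ) < n := by exact_mod_cast hn
  have hT : Tendsto (fun q : ℝ => n / (q + n)) atTop (𝓝[≠] 0) :=
    tendsto_nhdsWithin_of_tendsto_nhds_of_eventually_within _
      (tendsto_const_nhds.div_atTop (tendsto_atTop_add_const_right _ _ tendsto_id))
      ((eventually_gt_atTop 0).mono fun q hq => (div_pos hn0 (by linarith)).ne')
  convert ((tendsto_rpow_div_nhdsNE_zero_of_hasDerivAt n hG0 hG).comp hT).congr' ?_ using 2
  · simp only [sub_zero, rpow_one]
    congr 1
    ring
  · filter_upwards [eventually_gt_atTop 0] with q hq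
    have hqn : q + n ≠ 0 := by linarith
    have h1 : 1 - n / (q + n) = q / (q + n) := by field_simp; ring_nf
    have h2 : (n : ℝ) / (n / (q + n)) = q + n := by field_simp
    simp only [Function.comp_apply, G, h1, h2]
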